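/- Let M_α = diag(1,-1,-1,-1,-1) and M_β = diag(-1,-1,-1,1,-1) in SO(5). Under the double cover 𝔭 : Spin(5) → SO(5), the preimages are 𝔭⁻¹(M_α) = {± e₂·e₃·e₄·e₅} and 𝔭⁻¹(M_β) = {± e₁·e₂·e₃·e₅}, and for any choice of lifts M̂_α ∈ 𝔭⁻¹(M_α) and M̂_β ∈ 𝔭⁻¹(M_β) one has M̂_α · M̂_β = - M̂_β · M̂_α; in particular no choice of lifts makes them commute. -/

import Mathlib

open CliffordAlgebra

/-- The standard negative-definite quadratic form on `ℝ⁵` (so that `eᵢ² = -1` in the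
Clifford algebra), whose Clifford algebra contains `Spin(5) = spinGroup Q5`. -/
noncomputable def Q5 : QuadraticForm ℝ (Fin 5 → ℝ) :=
  QuadraticMap.weightedSumSquares ℝ (fun _ : Fin 5 => (-1 : ℝ))

/-- The standard orthonormal basis vectors of `ℝ⁵`. -/
def stdVec (i : Fin 5) : Fin 5 → ℝ := fun j => if j = i then 1 else 0

/-- `w ∈ Spin(5)` is a lift of `M ∈ SO(5)` under the double cover
`𝔭 : Spin(5) → SO(5)` if the (twisted) adjoint action of `w` on vectors is `M`,
i.e. `w · x · w⁻¹ = M x` for all `x ∈ ℝ⁵` (for `w` in the spin group `w⁻¹ = star w`). -/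
noncomputable def IsLiftOf (w : CliffordAlgebra Q5) (M : Matrix (Fin 5) (Fin 5) ℝ) : Prop :=
  ∀ x : Fin 5 → ℝ, w * ι Q5 x * star w = ι Q5 (M.mulVec x)

/-- `M_α = diag(1,-1,-1,-1,-1)`. -/
noncomputable def Malpha : Matrix (Fin 5) (Fin 5) ℝ := Matrix.diagonal ![1, -1, -1, -1, -1]

/-- `M_β = diag(-1,-1,-1,1,-1)`. -/
noncomputable def Mbeta : Matrix (Fin 5) (Fin 5) ℝ := Matrix.diagonal ![-1, -1, -1, 1, -1]

/-- `u = e₂e₃e₄e₅`. -/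
noncomputable def uElt : CliffordAlgebra Q5 :=
  ι Q5 (stdVec 1) * ι Q5 (stdVec 2) * ι Q5 (stdVec 3) * ι Q5 (stdVec 4)

/-- `v = e₁e₂e₃e₅`. -/
noncomputable def vElt : CliffordAlgebra Q5 :=
  ι Q5 (stdVec 0) * ι Q5 (stdVec 1) * ι Q5 (stdVec 2) * ι Q5 (stdVec 4)

/-!
Lifts of `diag(±1)` come from the commutation rule `eᵢ · e_l = (-1)^#{j ∈ l | j ≠ i} e_l · eᵢ` for
the monomials `e_l = ∏_{j ∈ l} e_j`: conjugation by `e_l` multiplies `eᵢ` by that sign. Two lifts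
`w, u` of the same rotation differ by `z = u⁻¹ w ∈ Spin(5)`, which commutes with every vector.
Expanding `z` in monomials and averaging over the grading involution and over conjugation by each
`eᵢ` leaves only monomials in which every index occurs an even number of times. These are scalars,
so `z` is a scalar of norm one, i.e. `z = ±1`. Finally `e₂e₃e₄e₅` and `e₁e₂e₃e₅` anticommute since
the exponents in the commutation rule add up to `3 + 3 + 4 + 3 = 13`.
-/

section Projection

variable {R N α : Type*} [CommRing R] [Invertible (2 : R)] [AddCommGroup N] [Module R N]

theorem mem_span_image_even_of_map_eq_self (T : N →ₗ[R] N) (f : α → N) (n : α → ℕ)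
    (hT : ∀ a, T (f a) = (-1 : R) ^ n a • f a) {A : Set α} {z : N}
    (hz : z ∈ Submodule.span R (f '' A)) (hTz : T z = z) :
    z ∈ Submodule.span R (f '' {a ∈ A | Even (n a)}) := by
  let P : N →ₗ[R] N := (⅟2 : R) • (LinearMap.id + T)
  have hPz : P z = z := by
    simp only [P, LinearMap.smul_apply, LinearMap.add_apply, LinearMap.id_apply, hTz, smul_add,
      invOf_two_smul_add_invOf_two_smul]
  rw [← hPz]
  refine (Submodule.span_le (p := (Submodule.span R _).comap P)).mpr ?_ hz
  rintro _ ⟨a, ha, rfl⟩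
  rcases Nat.even_or_odd (n a) with hn | hn
  · have : P (f a) = f a := by
      simp only [P, LinearMap.smul_apply, LinearMap.add_apply, LinearMap.id_apply, hT,
        hn.neg_one_pow, one_smul, smul_add, invOf_two_smul_add_invOf_two_smul]
    rw [SetLike.mem_coe, Submodule.mem_comap, this]
    exact Submodule.subset_span ⟨a, ⟨ha, hn⟩, rfl⟩
  · have : P (f a) = 0 := by
      simp [P, hT, hn.neg_one_pow]
    rw [SetLike.mem_coe, Submodule.mem_comap, this]
    exact zero_mem _

theorem mem_span_image_forall_even_of_map_eq_self {κ : Type*} [Fintype κ] (T : κ → N →ₗ[R] N)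
    (f : α → N) (n : κ → α → ℕ) (hT : ∀ k a, T k (f a) = (-1 : R) ^ n k a • f a) {A : Set α}
    {z : N} (hz : z ∈ Submodule.span R (f '' A)) (hTz : ∀ k, T k z = z) :
    z ∈ Submodule.span R (f '' {a ∈ A | ∀ k, Even (n k a)}) := by
  classical
  suffices ∀ s : Finset κ, z ∈ Submodule.span R (f '' {a ∈ A | ∀ k ∈ s, Even (n k a)}) by
    simpa using this Finset.univ
  intro s
  induction s using Finset.induction_on with
  | empty => simpa using hz
  | insert k s _ ih =>
    convert mem_span_image_even_of_map_eq_self (T k) f (n k) (hT k) ih (hTz k) using 4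
    ext a
    simp only [Finset.mem_insert, forall_eq_or_imp, Set.mem_ofPred_eq]
    tauto

end Projection

namespace CliffordAlgebra

section CommRing

variable {R M η : Type*} [CommRing R] [AddCommGroup M] [Module R M]

def ιProd (Q : QuadraticForm R M) (v : η → M) (l : List η) : CliffordAlgebra Q :=
  (l.map fun i => ι Q (v i)).prod

variable {Q : QuadraticForm R M} {v : η → M}

@[simp] theorem ιProd_nil : ιProd Q v [] = 1 := rfl

@[simp] theorem ιProd_cons (i : η) (l : List η) : ιProd Q v (i :: l) = ι Q (v i) * ιProd Q v l :=
  List.prod_cons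

@[simp] theorem ιProd_append (l l' : List η) :
    ιProd Q v (l ++ l') = ιProd Q v l * ιProd Q v l' := by
  simp [ιProd]

theorem involute_ιProd (l : List η) :
    involute (ιProd Q v l) = (-1 : R) ^ l.length • ιProd Q v l := by
  induction l with
  | nil => simp
  | cons i l ih => simp [ih, pow_succ']

theorem ιProd_mem_evenOdd (l : List η) : ιProd Q v l ∈ evenOdd Q l.length := by
  induction l with
  | nil => exact Submodule.one_le.mp (one_le_evenOdd_zero Q)
  | cons i l ih =>
    have := SetLike.mul_mem_graded (ι_mem_evenOdd_one Q (v i)) ih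
    rwa [add_comm, ← Nat.cast_one, ← Nat.cast_add] at this

theorem span_range_ιProd (hspan : Submodule.span R (Set.range v) = ⊤) :
    Submodule.span R (Set.range (ιProd Q v)) = ⊤ := by
  set S := Submodule.span R (Set.range (ιProd Q v))
  have hmul : S * S ≤ S := by
    rw [Submodule.span_mul_span]
    refine Submodule.span_mono ?_
    rintro _ ⟨_, ⟨l, rfl⟩, _, ⟨l', rfl⟩, rfl⟩
    exact ⟨l ++ l', ιProd_append l l'⟩
  have hι : ∀ m, ι Q m ∈ S := by
    intro m
    have hm : m ∈ Submodule.span R (Set.range v) := hspan ▸ Submodule.mem_top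
    have := Submodule.mem_map_of_mem (f := ι Q) hm
    rw [Submodule.map_span, ← Set.range_comp] at this
    refine Submodule.span_mono ?_ this
    rintro _ ⟨i, rfl⟩
    exact ⟨[i], by simp⟩
  refine Submodule.eq_top_iff'.mpr fun x => ?_
  induction x using CliffordAlgebra.induction with
  | algebraMap r =>
    rw [Algebra.algebraMap_eq_smul_one]
    exact S.smul_mem r (Submodule.subset_span ⟨[], rfl⟩)
  | ι m => exact hι m
  | mul a b ha hb => exact hmul (Submodule.mul_mem_mul ha hb)
  | add a b ha hb => exact S.add_mem ha hb

section Orthogonal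

variable (hv : Pairwise fun i j => Q.IsOrtho (v i) (v j))
include hv

theorem ι_mul_ιProd [DecidableEq η] (i : η) (l : List η) :
    ι Q (v i) * ιProd Q v l = (-1 : R) ^ l.countP (· ≠ i) • (ιProd Q v l * ι Q (v i)) := by
  induction l with
  | nil => simp
  | cons j l ih =>
    by_cases hji : j = i
    · subst hji
      rw [ιProd_cons, List.countP_cons_of_neg (by simp), ← mul_assoc, ih, smul_mul_assoc,
        smul_smul, ← pow_add, Even.neg_one_pow ⟨_, rfl⟩, one_smul, mul_assoc (ιProd Q v l),
        ι_sq_scalar, Algebra.commutes]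
    · rw [ιProd_cons, ← mul_assoc, ι_mul_ι_comm_of_isOrtho (hv (Ne.symm hji)), neg_mul, mul_assoc,
        ih]
      simp [hji, pow_succ, mul_assoc]

theorem ιProd_mem_one_of_forall_even_count [DecidableEq η] (l : List η)
    (h : ∀ i, Even (l.count i)) : ιProd Q v l ∈ (1 : Submodule R (CliffordAlgebra Q)) := by
  induction hl : l.length using Nat.strong_induction_on generalizing l with
  | _ n ih =>
  match l, h with
  | [], _ => exact Submodule.mem_one.mpr ⟨1, map_one _⟩
  | i :: t, h =>
    have hit : i ∈ t := by
      have := h i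
      rw [List.count_cons_self, Nat.even_add_one, Nat.not_even_iff_odd] at this
      exact List.count_pos_iff.mp this.pos
    -- cancel `e_i` against its next occurrence
    obtain ⟨A, C, rfl⟩ := List.append_of_mem hit
    have hAC : ιProd Q v (A ++ C) ∈ (1 : Submodule R (CliffordAlgebra Q)) := by
      refine ih _ (by simp [← hl]) _ (fun j => ?_) rfl
      have hcount :
          (i :: (A ++ i :: C)).count j = (A ++ C).count j + 2 * if i = j then 1 else 0 := by
        simp only [List.count_cons, List.count_append, beq_iff_eq]
        split_ifs <;> omega
      have := h j
      rw [hcount] at this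
      exact (Nat.even_add.mp this).mpr (even_two_mul _)
    have hsplit : ιProd Q v (i :: (A ++ i :: C)) =
        ((-1 : R) ^ A.countP (· ≠ i) * Q (v i)) • ιProd Q v (A ++ C) := by
      rw [ιProd_cons, ιProd_append, ιProd_cons, ← mul_assoc, ι_mul_ιProd hv, smul_mul_assoc,
        mul_assoc, ← mul_assoc (ι Q (v i)), ι_sq_scalar, Algebra.left_comm,
        ← Algebra.smul_def, smul_smul, ← ιProd_append]
    rw [hsplit]
    exact Submodule.smul_mem _ _ hAC

theorem ιProd_mul_ιProd [DecidableEq η] (l l' : List η) :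
    ιProd Q v l * ιProd Q v l' =
      (-1 : R) ^ (l.map fun i => l'.countP (· ≠ i)).sum • (ιProd Q v l' * ιProd Q v l) := by
  induction l with
  | nil => simp
  | cons i l ih =>
    rw [ιProd_cons, mul_assoc, ih, mul_smul_comm, ← mul_assoc, ι_mul_ιProd hv, smul_mul_assoc,
      mul_assoc, smul_smul, ← pow_add, List.map_cons, List.sum_cons, add_comm]

theorem mem_span_ιProd_forall_even_of_commute [Invertible (2 : R)] [Fintype η] [DecidableEq η]
    (hQ : ∀ i, IsUnit (Q (v i))) {A : Set (List η)} {z : CliffordAlgebra Q}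
    (hz : z ∈ Submodule.span R (ιProd Q v '' A)) (hcomm : ∀ i, Commute (ι Q (v i)) z) :
    z ∈ Submodule.span R (ιProd Q v '' {l ∈ A | ∀ i, Even (l.countP (· ≠ i))}) := by
  let conj (i : η) : CliffordAlgebra Q →ₗ[R] CliffordAlgebra Q :=
    (((hQ i).unit⁻¹ : Rˣ) : R) •
      (LinearMap.mulLeft R (ι Q (v i)) ∘ₗ LinearMap.mulRight R (ι Q (v i)))
  have hconj (i : η) (x : CliffordAlgebra Q) :
      conj i x = (((hQ i).unit⁻¹ : Rˣ) : R) • (ι Q (v i) * x * ι Q (v i)) := by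
    simp [conj, mul_assoc]
  have hconj_ιProd (i : η) (l : List η) :
      conj i (ιProd Q v l) = (-1 : R) ^ l.countP (· ≠ i) • ιProd Q v l := by
    rw [hconj, ι_mul_ιProd hv, smul_mul_assoc, mul_assoc, ι_sq_scalar, ← Algebra.commutes,
      ← Algebra.smul_def, smul_comm _ (Q (v i)), smul_smul, (hQ i).val_inv_mul, one_smul]
  have hconj_z (i : η) : conj i z = z := by
    rw [hconj, (hcomm i).eq, mul_assoc, ι_sq_scalar, ← Algebra.commutes, ← Algebra.smul_def,
      smul_smul, (hQ i).val_inv_mul, one_smul]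
  exact mem_span_image_forall_even_of_map_eq_self conj (ιProd Q v) (fun i l => l.countP (· ≠ i))
    hconj_ιProd hz hconj_z

theorem mem_one_of_involute_eq_of_commute [Invertible (2 : R)] [Fintype η]
    (hspan : Submodule.span R (Set.range v) = ⊤) (hQ : ∀ i, IsUnit (Q (v i)))
    {z : CliffordAlgebra Q} (hz : involute z = z) (hcomm : ∀ i, Commute (ι Q (v i)) z) :
    z ∈ (1 : Submodule R (CliffordAlgebra Q)) := by
  classical
  have hall : z ∈ Submodule.span R (ιProd Q v '' Set.univ) := by
    rw [Set.image_univ, span_range_ιProd hspan]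
    exact Submodule.mem_top
  have heven := mem_span_image_even_of_map_eq_self involute.toLinearMap (ιProd Q v) List.length
    involute_ιProd hall hz
  refine (Submodule.span_le (p := 1)).mpr ?_
    (mem_span_ιProd_forall_even_of_commute hv hQ heven hcomm)
  rintro _ ⟨l, ⟨⟨-, hlen⟩, hcount⟩, rfl⟩
  refine ιProd_mem_one_of_forall_even_count hv l fun i => ?_
  have hi := hcount i
  rw [List.length_eq_countP_add_countP (· ≠ i)] at hlen
  simp [List.count_eq_countP, Nat.even_add] at hlen hi ⊢
  exact hlen.mp hi

end Orthogonal

theorem ι_mem_pinGroup {m : M} (hm : Q m = -1) : ι Q m ∈ pinGroup Q := by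
  have hsq : ι Q m * ι Q m = -1 := by rw [ι_sq_scalar, hm, map_neg, map_one]
  let u : (CliffordAlgebra Q)ˣ := ⟨ι Q m, -ι Q m, by rw [mul_neg, hsq, neg_neg],
    by rw [neg_mul, hsq, neg_neg]⟩
  refine pinGroup.mem_iff.mpr ⟨⟨u, Subgroup.subset_closure ⟨m, rfl⟩, rfl⟩, ?_⟩
  rw [Unitary.mem_iff, star_ι, neg_mul, mul_neg, hsq, neg_neg]
  exact ⟨rfl, rfl⟩

theorem ιProd_mem_spinGroup (hv : ∀ i, Q (v i) = -1) {l : List η} (hl : Even l.length) :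
    ιProd Q v l ∈ spinGroup Q := by
  refine spinGroup.mem_iff.mpr ⟨Submonoid.list_prod_mem _ ?_, ?_⟩
  · simpa using fun i _ => ι_mem_pinGroup (hv i)
  · rw [← Subalgebra.mem_toSubmodule, even_toSubmodule, ← (ZMod.natCast_eq_zero_iff_even).mpr hl]
    exact ιProd_mem_evenOdd l

theorem neg_mem_spinGroup {m : M} (hm : Q m = -1) {x : CliffordAlgebra Q}
    (hx : x ∈ spinGroup Q) : -x ∈ spinGroup Q := by
  have hsq : ι Q m * ι Q m ∈ spinGroup Q := by
    refine spinGroup.mem_iff.mpr ⟨mul_mem (ι_mem_pinGroup hm) (ι_mem_pinGroup hm), ?_⟩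
    rw [← Subalgebra.mem_toSubmodule, even_toSubmodule]
    exact ι_mul_ι_mem_evenOdd_zero Q m m
  rw [← neg_one_mul, ← map_one (algebraMap R _), ← map_neg, ← hm, ← ι_sq_scalar]
  exact mul_mem hsq hx

theorem commute_of_mul_mul_star_eq {z a : CliffordAlgebra Q} (hz : z ∈ spinGroup Q)
    (h : z * a * star z = a) : Commute a z :=
  calc a * z = z * a * star z * z := by rw [h]
    _ = z * a * (star z * z) := by simp only [mul_assoc]
    _ = z * a := by rw [spinGroup.star_mul_self_of_mem hz, mul_one]

theorem mul_ne_mul_of_mul_eq_neg [Invertible (2 : R)] [Nontrivial R] {x y : CliffordAlgebra Q}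
    (hxy : x * y ∈ spinGroup Q) (h : x * y = -(y * x)) : x * y ≠ y * x := by
  intro h'
  have hzero : x * y = 0 := by
    rw [← invOf_two_smul_add_invOf_two_smul R (x * y)]
    nth_rewrite 2 [h]
    rw [h', smul_neg, add_neg_cancel]
  have := spinGroup.mul_star_self_of_mem hxy
  rw [hzero, zero_mul] at this
  exact zero_ne_one this

end CommRing

section Field

variable {K M η : Type*} [Field K] [Invertible (2 : K)] [AddCommGroup M] [Module K M] [Fintype η]
  {Q : QuadraticForm K M} {v : η → M}
  (hspan : Submodule.span K (Set.range v) = ⊤) (hv : Pairwise fun i j => Q.IsOrtho (v i) (v j))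
  (hQ : ∀ i, Q (v i) ≠ 0)
include hspan hv hQ

theorem eq_one_or_eq_neg_one_of_commute {z : CliffordAlgebra Q} (hz : z ∈ spinGroup Q)
    (hcomm : ∀ i, Commute (ι Q (v i)) z) : z = 1 ∨ z = -1 := by
  obtain ⟨r, rfl⟩ := Submodule.mem_one.mp <| mem_one_of_involute_eq_of_commute hv hspan
    (fun i => (hQ i).isUnit) (spinGroup.involute_eq hz) hcomm
  have hr := spinGroup.mul_star_self_of_mem hz
  rw [star_algebraMap, ← map_mul, ← map_one (algebraMap K _)] at hr
  rcases mul_self_eq_one_iff.mp ((algebraMap K _).injective hr) with rfl | rfl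
  · exact Or.inl (map_one _)
  · exact Or.inr (by rw [map_neg, map_one])

theorem eq_or_eq_neg_of_forall_conj_eq {w u : CliffordAlgebra Q} (hw : w ∈ spinGroup Q)
    (hu : u ∈ spinGroup Q) (h : ∀ m, w * ι Q m * star w = u * ι Q m * star u) :
    w = u ∨ w = -u := by
  have hz : star u * w ∈ spinGroup Q := mul_mem (spinGroup.star_mem hu) hw
  have hfix (m : M) : star u * w * ι Q m * star (star u * w) = ι Q m := by
    rw [star_mul, star_star, show star u * w * ι Q m * (star w * u) =
      star u * (w * ι Q m * star w) * u by noncomm_ring, h, show star u * (u * ι Q m * star u) * u =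
      (star u * u) * ι Q m * (star u * u) by noncomm_ring, spinGroup.star_mul_self_of_mem hu,
      one_mul, mul_one]
  have hw_eq : w = u * (star u * w) := by
    rw [← mul_assoc, spinGroup.mul_star_self_of_mem hu, one_mul]
  rcases eq_one_or_eq_neg_one_of_commute hspan hv hQ hz
      (fun i => commute_of_mul_mul_star_eq hz (hfix (v i))) with h1 | h1
  · exact Or.inl (by rw [hw_eq, h1, mul_one])
  · exact Or.inr (by rw [hw_eq, h1, mul_neg_one])

end Field

end CliffordAlgebra

theorem stdVec_eq_single (i : Fin 5) : stdVec i = Pi.single i 1 := by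
  funext j
  simp [stdVec, Pi.single_apply]

theorem Q5_stdVec (i : Fin 5) : Q5 (stdVec i) = -1 := by
  simp [Q5, QuadraticMap.weightedSumSquares_apply, stdVec_eq_single, Pi.single_apply]

theorem isOrtho_stdVec : Pairwise fun i j => Q5.IsOrtho (stdVec i) (stdVec j) := by
  intro i j hij
  rw [QuadraticMap.isOrtho_def]
  simp [Q5, QuadraticMap.weightedSumSquares_apply, stdVec_eq_single, Pi.single_apply, mul_add,
    Finset.sum_add_distrib, hij, Ne.symm hij]

theorem span_range_stdVec : Submodule.span ℝ (Set.range stdVec) = ⊤ := by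
  convert (Pi.basisFun ℝ (Fin 5)).span_eq
  ext1 i
  rw [stdVec_eq_single, Pi.basisFun_apply]

theorem isLiftOf_of_forall_stdVec {w : CliffordAlgebra Q5} {M : Matrix (Fin 5) (Fin 5) ℝ}
    (h : ∀ i, w * ι Q5 (stdVec i) * star w = ι Q5 (M.mulVec (stdVec i))) : IsLiftOf w M := by
  have := (Pi.basisFun ℝ (Fin 5)).ext
    (f₁ := LinearMap.mulRight ℝ (star w) ∘ₗ LinearMap.mulLeft ℝ w ∘ₗ ι Q5)
    (f₂ := ι Q5 ∘ₗ M.mulVecLin) fun i => by simpa [stdVec_eq_single] using h i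
  intro x
  simpa using LinearMap.congr_fun this x

theorem IsLiftOf.neg {w : CliffordAlgebra Q5} {M : Matrix (Fin 5) (Fin 5) ℝ} (h : IsLiftOf w M) :
    IsLiftOf (-w) M := by
  intro x
  simpa using h x

theorem isLiftOf_ιProd (l : List (Fin 5)) (hl : ιProd Q5 stdVec l * star (ιProd Q5 stdVec l) = 1) :
    IsLiftOf (ιProd Q5 stdVec l) (Matrix.diagonal fun j => (-1) ^ l.countP (· ≠ j)) := by
  refine isLiftOf_of_forall_stdVec fun j => ?_
  have hswap : ιProd Q5 stdVec l * ι Q5 (stdVec j) =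
      (-1 : ℝ) ^ l.countP (· ≠ j) • (ι Q5 (stdVec j) * ιProd Q5 stdVec l) := by
    rw [ι_mul_ιProd isOrtho_stdVec, smul_smul, ← pow_add, Even.neg_one_pow ⟨_, rfl⟩, one_smul]
  rw [hswap, smul_mul_assoc, mul_assoc, hl, mul_one, ← map_smul, stdVec_eq_single,
    Matrix.diagonal_mulVec_single, mul_one, ← Pi.single_smul', smul_eq_mul, mul_one]

theorem isLiftOf_iff_eq_or_eq_neg {w u : CliffordAlgebra Q5} {M : Matrix (Fin 5) (Fin 5) ℝ}
    (hw : w ∈ spinGroup Q5) (hu : u ∈ spinGroup Q5) (hlift : IsLiftOf u M) :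
    IsLiftOf w M ↔ w = u ∨ w = -u := by
  refine ⟨fun hw_lift => ?_, ?_⟩
  · exact eq_or_eq_neg_of_forall_conj_eq span_range_stdVec isOrtho_stdVec
      (fun i => by simp [Q5_stdVec]) hw hu fun m => (hw_lift m).trans (hlift m).symm
  · rintro (rfl | rfl)
    exacts [hlift, hlift.neg]

theorem uElt_eq_ιProd : uElt = ιProd Q5 stdVec [1, 2, 3, 4] := by
  simp [uElt, ιProd, mul_assoc]

theorem vElt_eq_ιProd : vElt = ιProd Q5 stdVec [0, 1, 2, 4] := by
  simp [vElt, ιProd, mul_assoc]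

theorem uElt_mem_spinGroup : uElt ∈ spinGroup Q5 :=
  uElt_eq_ιProd ▸ ιProd_mem_spinGroup Q5_stdVec ⟨2, rfl⟩

theorem vElt_mem_spinGroup : vElt ∈ spinGroup Q5 :=
  vElt_eq_ιProd ▸ ιProd_mem_spinGroup Q5_stdVec ⟨2, rfl⟩

theorem isLiftOf_uElt_Malpha : IsLiftOf uElt Malpha := by
  have hM :
      Malpha = Matrix.diagonal fun j => (-1) ^ ([1, 2, 3, 4] : List (Fin 5)).countP (· ≠ j) := by
    rw [Malpha]
    congr 1
    funext j
    fin_cases j <;> simp <;> norm_num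
  rw [hM, uElt_eq_ιProd]
  exact isLiftOf_ιProd _ (uElt_eq_ιProd ▸ spinGroup.mul_star_self_of_mem uElt_mem_spinGroup)

theorem isLiftOf_vElt_Mbeta : IsLiftOf vElt Mbeta := by
  have hM :
      Mbeta = Matrix.diagonal fun j => (-1) ^ ([0, 1, 2, 4] : List (Fin 5)).countP (· ≠ j) := by
    rw [Mbeta]
    congr 1
    funext j
    fin_cases j <;> simp <;> norm_num
  rw [hM, vElt_eq_ιProd]
  exact isLiftOf_ιProd _ (vElt_eq_ιProd ▸ spinGroup.mul_star_self_of_mem vElt_mem_spinGroup)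

theorem uElt_mul_vElt : uElt * vElt = -(vElt * uElt) := by
  have hexp : (([1, 2, 3, 4] : List (Fin 5)).map fun i =>
      ([0, 1, 2, 4] : List (Fin 5)).countP (· ≠ i)).sum = 13 := by decide
  rw [uElt_eq_ιProd, vElt_eq_ιProd, ιProd_mul_ιProd isOrtho_stdVec, hexp]
  norm_num

/-- The preimages under `𝔭 : Spin(5) → SO(5)` of `M_α` and `M_β` are
`{± e₂e₃e₄e₅}` and `{± e₁e₂e₃e₅}` respectively, and any choices of lifts
`M̂_α`, `M̂_β` anticommute: `M̂_α · M̂_β = - M̂_β · M̂_α`; in particular no choice of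
lifts commutes. -/
theorem stmt11 :
    (∀ w ∈ spinGroup Q5, (IsLiftOf w Malpha ↔ (w = uElt ∨ w = -uElt))) ∧
    (∀ w ∈ spinGroup Q5, (IsLiftOf w Mbeta ↔ (w = vElt ∨ w = -vElt))) ∧
    uElt ∈ spinGroup Q5 ∧ -uElt ∈ spinGroup Q5 ∧
    vElt ∈ spinGroup Q5 ∧ -vElt ∈ spinGroup Q5 ∧
    (∀ w w' : CliffordAlgebra Q5, (w = uElt ∨ w = -uElt) → (w' = vElt ∨ w' = -vElt) →
      w * w' = -(w' * w) ∧ w * w' ≠ w' * w) := by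
  have hu := uElt_mem_spinGroup
  have hv := vElt_mem_spinGroup
  have hu_neg := neg_mem_spinGroup (Q5_stdVec 0) hu
  have hv_neg := neg_mem_spinGroup (Q5_stdVec 0) hv
  refine ⟨fun w hw => isLiftOf_iff_eq_or_eq_neg hw hu isLiftOf_uElt_Malpha,
    fun w hw => isLiftOf_iff_eq_or_eq_neg hw hv isLiftOf_vElt_Mbeta,
    hu, hu_neg, hv, hv_neg, fun w w' hw hw' => ?_⟩
  have hmem : w * w' ∈ spinGroup Q5 := by
    rcases hw with rfl | rfl <;> rcases hw' with rfl | rfl <;>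
      exact mul_mem (by assumption) (by assumption)
  have hanti : w * w' = -(w' * w) := by
    rcases hw with rfl | rfl <;> rcases hw' with rfl | rfl <;> simp [uElt_mul_vElt]
  exact ⟨hanti, mul_ne_mul_of_mul_eq_neg hmem hanti⟩
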